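/- arXiv:2605.03664 — 2 statements merged into one kernel-verified Lean document; each statement's English description precedes it below -/
import Mathlib

section
/- Let 0 < λ < 1, 0 < q ≤ 1, and let n be a natural number. For every real z with |z| < 1 − λ^{1/q}, Σ_{t=n}^∞ z^t · λ^n · Σ_{m=0}^∞ C(n+m, n)·(−λ)^m·[ĥ_{q(n+m)}(t−n+1) + λ·ĥ_{q(n+m+1)−1}(t−n+1)] = λ^n · z^n · ((1−z)^{q−1} + λ) / ((1−z)^q + λ)^{n+1}, where all inner series converge. (The inner expression is the probability P(N^q(t) = n) that the renewal process with discrete Mittag-Leffler waiting times has exactly n events by time t, and the right-hand side equals G(z)^n·(1−G(z))/(1−z) for the waiting-time probability generating function G(z) = λz/((1−z)^q + λ).) -/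
/-!
Summing over `s` first turns each generalized binomial coefficient into a binomial series,
`∑ₛ ĥ_α(s+1) uˢ = (1 - u)^(-(α+1))`, so the `m`-th inner term contributes
`C(n+m, n) (-λ)ᵐ ((1-u)^(q-1) + λ) / ((1-u)^q)^(n+m+1)`, and the remaining sum over `m` is a negative
binomial series in `-λ / (1-u)^q`. The hypothesis `|z| < 1 - λ^(1/q)` says `λ < (1 - |z|)^q`, which
makes the double series absolutely convergent, so the two summations may be exchanged; absolute
convergence at some point `u > 0` also yields the convergence of each inner series.
-/

noncomputable def hhat (α x : ℝ) : ℝ :=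
  Real.Gamma (x + α) / (Real.Gamma (α + 1) * Real.Gamma x)

theorem Real.Gamma_add_nat_eq_mul_ascPochhammer {x : ℝ} (hx : 0 < x) (n : ℕ) :
    Real.Gamma (x + n) = Real.Gamma x * (ascPochhammer ℝ n).eval x := by
  induction n with
  | zero => simp
  | succ n ih =>
    rw [Nat.cast_succ, ← add_assoc, Real.Gamma_add_one (s := x + n) (by positivity), ih,
      ascPochhammer_succ_eval]
    ring

section hhat

variable {α : ℝ}

theorem hhat_natCast_add_one_pos (hα : -1 < α) (s : ℕ) : 0 < hhat α (s + 1) := by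
  have : 0 < (s : ℝ) + 1 + α := by linarith [s.cast_nonneg (α := ℝ)]
  unfold hhat
  have := Real.Gamma_pos_of_pos (show 0 < α + 1 by linarith)
  positivity

theorem hhat_natCast_add_one (hα : -1 < α) (s : ℕ) :
    hhat α (s + 1) = Ring.choose (α + s) s := by
  rw [Ring.choose_eq_smul, Polynomial.descPochhammer_smeval_eq_ascPochhammer,
    Polynomial.ascPochhammer_smeval_eq_eval,
    hhat, show (s : ℝ) + 1 + α = α + 1 + s by ring,
    Real.Gamma_add_nat_eq_mul_ascPochhammer (by linarith), Real.Gamma_nat_eq_factorial,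
    add_sub_cancel_right, smul_eq_mul]
  have := (Real.Gamma_pos_of_pos (show 0 < α + 1 by linarith)).ne'
  field_simp

theorem hasSum_hhat_mul_pow (hα : -1 < α) {x : ℝ} (hx : |x| < 1) :
    HasSum (fun s : ℕ => hhat α (s + 1) * x ^ s) ((1 - x) ^ (-(α + 1))) := by
  have h := (Real.one_div_one_sub_rpow_hasFPowerSeriesOnBall_zero (α + 1)).hasSum
    (y := x) (by simpa [enorm_eq_nnnorm, ← NNReal.coe_lt_one] using hx)
  simp only [FormalMultilinearSeries.ofScalars_apply_eq, smul_eq_mul, zero_add] at h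
  rw [Real.rpow_neg (by linarith [(abs_lt.mp hx).2]), ← one_div]
  refine h.congr_fun fun s => ?_
  rw [hhat_natCast_add_one hα, add_right_comm, add_sub_cancel_right]

end hhat

theorem hasSum_choose_mul_pow_div_pow (n : ℕ) {r P : ℝ} (X : ℝ) (hr : |r| < P) :
    HasSum (fun m : ℕ => ((n + m).choose n : ℝ) * r ^ m * (X / P ^ (n + m + 1)))
      (X / (P - r) ^ (n + 1)) := by
  have hP : 0 < P := (abs_nonneg r).trans_lt hr
  have hrP : ‖r / P‖ < 1 := by
    rwa [Real.norm_eq_abs, abs_div, abs_of_pos hP, div_lt_one hP]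
  have hPr : P - r ≠ 0 := by linarith [le_abs_self r]
  have h := (hasSum_choose_mul_geometric_of_norm_lt_one n hrP).mul_right (X / P ^ (n + 1))
  have hsum : 1 / (1 - r / P) ^ (n + 1) * (X / P ^ (n + 1)) = X / (P - r) ^ (n + 1) := by
    rw [one_sub_div hP.ne', div_pow]
    field_simp
  refine hsum ▸ h.congr_fun fun m => ?_
  rw [add_comm m n, div_pow, add_right_comm, pow_add]
  field_simp

theorem Summable.hasSum_swap_fiberwise {E : Type*} [NormedAddCommGroup E] [CompleteSpace E]
    {f : ℕ × ℕ → E} (hf : Summable f) {g : ℕ → E} {a : E}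
    (hg : ∀ m, HasSum (fun s => f (m, s)) (g m)) (ha : HasSum g a) :
    HasSum (fun s => ∑' m, f (m, s)) a := by
  have htsum : ∑' p, f p = a := (hf.hasSum.prod_fiberwise hg).unique ha
  have hswap : HasSum (fun p : ℕ × ℕ => f p.swap) a :=
    htsum ▸ (Equiv.prodComm ℕ ℕ).hasSum_iff.mpr hf.hasSum
  exact hswap.prod_fiberwise fun s => (hswap.summable.prod_factor s).hasSum

/-- `λⁿ ∑ₘ eventCountTerm (-λ) λ q n m (t - n)` is `P(N^q(t) = n)`; keeping the ratio `r` free lets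
`r = |-λ|` supply the dominating series. -/
noncomputable def eventCountTerm (r lam q : ℝ) (n m s : ℕ) : ℝ :=
  (Nat.choose (n + m) n : ℝ) * r ^ m *
    (hhat (q * ((n : ℝ) + m)) ((s : ℝ) + 1) + lam * hhat (q * ((n : ℝ) + m + 1) - 1) ((s : ℝ) + 1))

section eventCountTerm

variable {r lam q u : ℝ}

theorem abs_eventCountTerm (hlam : 0 ≤ lam) (hq : 0 < q) (n m s : ℕ) :
    |eventCountTerm r lam q n m s| = eventCountTerm |r| lam q n m s := by
  have hκ : (0 : ℝ) ≤ n + m := by positivity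
  have h₁ := hhat_natCast_add_one_pos (α := q * ((n : ℝ) + m)) (by nlinarith) s
  have h₂ := hhat_natCast_add_one_pos (α := q * ((n : ℝ) + m + 1) - 1) (by nlinarith) s
  rw [eventCountTerm, eventCountTerm, abs_mul, abs_mul, abs_pow, Nat.abs_cast,
    abs_of_pos (add_pos_of_pos_of_nonneg h₁ (mul_nonneg hlam h₂.le))]

theorem hasSum_eventCountTerm_mul_pow (hq : 0 < q) (hu : |u| < 1) (r lam : ℝ) (n m : ℕ) :
    HasSum (fun s : ℕ => eventCountTerm r lam q n m s * u ^ s)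
      ((n + m).choose n * r ^ m * (((1 - u) ^ (q - 1) + lam) / ((1 - u) ^ q) ^ (n + m + 1))) := by
  have hv : 0 < 1 - u := by linarith [(abs_lt.mp hu).2]
  have hκ : (0 : ℝ) ≤ n + m := by positivity
  have h₁ := hasSum_hhat_mul_pow (α := q * ((n : ℝ) + m)) (by nlinarith) hu
  have h₂ := hasSum_hhat_mul_pow (α := q * ((n : ℝ) + m + 1) - 1) (by nlinarith) hu
  have hsum : (1 - u) ^ (-(q * ((n : ℝ) + m) + 1)) +
      lam * (1 - u) ^ (-(q * ((n : ℝ) + m + 1) - 1 + 1)) =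
      ((1 - u) ^ (q - 1) + lam) / ((1 - u) ^ q) ^ (n + m + 1) := by
    rw [← Real.rpow_natCast, ← Real.rpow_mul hv.le, add_div, ← Real.rpow_sub hv,
      div_eq_mul_inv lam, ← Real.rpow_neg hv.le]
    push_cast
    ring_nf
  refine (hsum ▸ (h₁.add (h₂.mul_left lam)).mul_left _).congr_fun fun s => ?_
  simp only [eventCountTerm]
  ring

theorem summable_eventCountTerm_mul_pow (hlam : 0 ≤ lam) (hq : 0 < q) (hu : |u| < 1)
    (hr : |r| < (1 - |u|) ^ q) (n : ℕ) :
    Summable (fun p : ℕ × ℕ => eventCountTerm r lam q n p.1 p.2 * u ^ p.2) := by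
  have hu' : |(|u|)| < 1 := by rwa [abs_abs]
  rw [← summable_abs_iff]
  refine (summable_prod_of_nonneg fun p => abs_nonneg _).mpr ⟨fun m => ?_, ?_⟩ <;>
    simp only [abs_mul, abs_eventCountTerm hlam hq, abs_pow]
  · exact (hasSum_eventCountTerm_mul_pow hq hu' |r| lam n m).summable
  · simp only [fun m => (hasSum_eventCountTerm_mul_pow hq hu' |r| lam n m).tsum_eq]
    exact (hasSum_choose_mul_pow_div_pow n _ (by rwa [abs_abs])).summable

theorem hasSum_tsum_eventCountTerm_mul_pow (hlam : 0 ≤ lam) (hq : 0 < q) (hu : |u| < 1)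
    (hr : |r| < (1 - |u|) ^ q) (n : ℕ) :
    HasSum (fun s : ℕ => (∑' m, eventCountTerm r lam q n m s) * u ^ s)
      (((1 - u) ^ (q - 1) + lam) / ((1 - u) ^ q - r) ^ (n + 1)) := by
  have hr' : |r| < (1 - u) ^ q :=
    hr.trans_le (Real.rpow_le_rpow (by linarith) (by linarith [le_abs_self u]) hq.le)
  simp only [← tsum_mul_right]
  exact (summable_eventCountTerm_mul_pow hlam hq hu hr n).hasSum_swap_fiberwise
    (hasSum_eventCountTerm_mul_pow hq hu r lam n) (hasSum_choose_mul_pow_div_pow n _ hr')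

theorem summable_eventCountTerm (hlam : 0 ≤ lam) (hq : 0 < q) (hu₀ : 0 < u) (hu₁ : u < 1)
    (hr : |r| < (1 - u) ^ q) (n s : ℕ) :
    Summable (fun m => eventCountTerm r lam q n m s) := by
  have h := summable_eventCountTerm_mul_pow (r := r) (u := u) hlam hq (by rwa [abs_of_pos hu₀])
    (by rwa [abs_of_pos hu₀]) n
  exact (summable_mul_right_iff (pow_ne_zero s hu₀.ne')).mp
    ((h.comp_injective Prod.swap_injective).prod_factor s)

end eventCountTerm

theorem pgf_event_counts_general (lam q : ℝ) (hlam0 : 0 < lam)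
    (hq0 : 0 < q) (n : ℕ) (z : ℝ) (hz : |z| < 1 - lam ^ (1 / q)) :
    (∀ t : ℕ, n ≤ t → Summable (fun m : ℕ =>
        (Nat.choose (n + m) n : ℝ) * (-lam) ^ m *
          (hhat (q * ((n : ℝ) + m)) ((t : ℝ) - n + 1) +
            lam * hhat (q * ((n : ℝ) + m + 1) - 1) ((t : ℝ) - n + 1)))) ∧
    HasSum (fun s : ℕ => z ^ (s + n) * lam ^ n * ∑' m : ℕ,
        (Nat.choose (n + m) n : ℝ) * (-lam) ^ m *
          (hhat (q * ((n : ℝ) + m)) ((s : ℝ) + 1) +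
            lam * hhat (q * ((n : ℝ) + m + 1) - 1) ((s : ℝ) + 1)))
      (lam ^ n * z ^ n * ((1 - z) ^ (q - 1) + lam) / ((1 - z) ^ q + lam) ^ (n + 1)) := by
  have hroot : 0 < lam ^ (1 / q) := Real.rpow_pos_of_pos hlam0 _
  have hlt : ∀ u, 0 ≤ u → u < 1 - lam ^ (1 / q) → |-lam| < (1 - u) ^ q := fun u hu₀ hu => by
    rw [abs_neg, abs_of_pos hlam0, ← Real.rpow_inv_lt_iff_of_pos hlam0.le (by linarith) hq0,
      ← one_div]
    linarith
  refine ⟨fun t ht => ?_, ?_⟩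
  · obtain ⟨u, hu₀, hu⟩ : ∃ u, 0 < u ∧ u < 1 - lam ^ (1 / q) :=
      ⟨(1 - lam ^ (1 / q)) / 2, by linarith [abs_nonneg z], by linarith [abs_nonneg z]⟩
    rw [← Nat.cast_sub ht]
    exact summable_eventCountTerm hlam0.le hq0 hu₀ (by linarith) (hlt u hu₀.le hu)
      n (t - n)
  · have h := (hasSum_tsum_eventCountTerm_mul_pow hlam0.le hq0 (by linarith)
      (hlt |z| (abs_nonneg z) hz) n).mul_left (lam ^ n * z ^ n)
    rw [sub_neg_eq_add, ← mul_div_assoc] at h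
    refine h.congr_fun fun s => ?_
    simp only [eventCountTerm, pow_add]
    ring

/-- The generating function in `t` of the probability `P(N^q(t) = n)` of the discrete-time
fractional Poisson process: for `|z| < 1 − λ^{1/q}`,
`Σ_{t=n}^∞ z^t · λ^n · Σ_m C(n+m,n)(−λ)^m [ĥ_{q(n+m)}(t−n+1) + λ·ĥ_{q(n+m+1)−1}(t−n+1)]
  = λ^n z^n ((1−z)^{q−1} + λ)/((1−z)^q + λ)^{n+1}`,
where all inner series converge. -/
theorem pgf_event_counts (lam q : ℝ) (hlam0 : 0 < lam) (hlam1 : lam < 1)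
    (hq0 : 0 < q) (hq1 : q ≤ 1) (n : ℕ) (z : ℝ) (hz : |z| < 1 - lam ^ (1 / q)) :
    (∀ t : ℕ, n ≤ t → Summable (fun m : ℕ =>
        (Nat.choose (n + m) n : ℝ) * (-lam) ^ m *
          (hhat (q * ((n : ℝ) + m)) ((t : ℝ) - n + 1) +
            lam * hhat (q * ((n : ℝ) + m + 1) - 1) ((t : ℝ) - n + 1)))) ∧
    HasSum (fun s : ℕ => z ^ (s + n) * lam ^ n * ∑' m : ℕ,
        (Nat.choose (n + m) n : ℝ) * (-lam) ^ m *
          (hhat (q * ((n : ℝ) + m)) ((s : ℝ) + 1) +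
            lam * hhat (q * ((n : ℝ) + m + 1) - 1) ((s : ℝ) + 1)))
      (lam ^ n * z ^ n * ((1 - z) ^ (q - 1) + lam) / ((1 - z) ^ q + lam) ^ (n + 1)) :=
  pgf_event_counts_general lam q hlam0 hq0 n z hz
end

section
/- Let 0 < λ < 1 and 0 < q ≤ 1. For every positive integer t, Σ_{m=0}^∞ (−λ)^m·ĥ_{qm}(t+1) + λ·Σ_{m=0}^∞ (−λ)^m·ĥ_{qm+q−1}(t+1) = F_{q,−λ}(t), where both series converge. (This shows that the probability P(N^q(t) = 0) of no events by time t coincides with the survival probability P(T > t) = F_{q,−λ}(t) of the first waiting time.) -/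
/-- Discrete Mittag-Leffler function `F_{q,λ}(t) = Σ_m ĥ_{qm}(t)·λ^m`, with `F_{q,λ}(0) = 1`. -/
noncomputable def dML (q lam : ℝ) (t : ℕ) : ℝ :=
  if t = 0 then 1 else ∑' m : ℕ, hhat (q * m) (t : ℝ) * lam ^ m

/-!
Pascal's rule `ĥ_α(t + 1) - ĥ_{α-1}(t + 1) = ĥ_α(t)`, applied with `α = q(m + 1)`, turns the
`(m + 1)`-st term of `F_{q,-λ}(t)` into the `(m + 1)`-st term of the first series plus `λ` times
the `m`-th term of the second; the `0`-th terms agree since `ĥ_0 = 1`. Convergence comes from the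
bound `ĥ_α(n + 1) ≤ (2 + α)^n`, polynomial in `α`, against the geometric factor `λ^m`.
-/

open Finset

lemma hhat_zero_left {x : ℝ} (hx : 0 < x) : hhat 0 x = 1 := by
  rw [hhat, add_zero, zero_add, Real.Gamma_one, one_mul,
    div_self (Real.Gamma_pos_of_pos hx).ne']

lemma hhat_pos {α x : ℝ} (hα : 0 < α + 1) (hx : 0 < x) (hxα : 0 < x + α) :
    0 < hhat α x := by
  unfold hhat
  have := Real.Gamma_pos_of_pos hα
  have := Real.Gamma_pos_of_pos hx
  have := Real.Gamma_pos_of_pos hxα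
  positivity

lemma hhat_add_one {α x : ℝ} (hx : 0 < x) (hxα : 0 < x + α) :
    hhat α (x + 1) = (x + α) / x * hhat α x := by
  rw [hhat, hhat, add_right_comm, Real.Gamma_add_one hxα.ne', Real.Gamma_add_one hx.ne']
  have := (Real.Gamma_pos_of_pos hx).ne'
  field_simp

lemma hhat_add_one_sub_hhat_sub_one {α x : ℝ} (hα : 0 < α) (hx : 0 < x) :
    hhat α (x + 1) - hhat (α - 1) (x + 1) = hhat α x := by
  have hxα : 0 < x + α := by positivity
  have h_arg : x + 1 + (α - 1) = x + α := by ring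
  rw [hhat_add_one hx hxα, hhat, hhat, h_arg, sub_add_cancel,
    Real.Gamma_add_one hα.ne', Real.Gamma_add_one hx.ne']
  have := (Real.Gamma_pos_of_pos hα).ne'
  have := (Real.Gamma_pos_of_pos hx).ne'
  field_simp
  ring

lemma hhat_one_right {α : ℝ} (hα : 0 < α + 1) : hhat α 1 = 1 := by
  rw [hhat, Real.Gamma_one, mul_one, add_comm, div_self (Real.Gamma_pos_of_pos hα).ne']

lemma hhat_natCast_add_one_le {α : ℝ} (hα : -1 < α) (n : ℕ) :
    hhat α (n + 1) ≤ (2 + α) ^ n := by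
  induction n with
  | zero => simp [hhat_one_right (by linarith : 0 < α + 1)]
  | succ n ih =>
    have hn : (0 : ℝ) < n + 1 := by positivity
    have hnα : (0 : ℝ) < n + 1 + α := by linarith
    have h_ratio : (n + 1 + α) / (n + 1) ≤ 2 + α := by
      rw [div_le_iff₀ hn]
      nlinarith [(n.cast_nonneg : (0 : ℝ) ≤ n)]
    calc hhat α ((n + 1 : ℕ) + 1) = (n + 1 + α) / (n + 1) * hhat α (n + 1) := by
          push_cast; exact hhat_add_one hn hnα
      _ ≤ (2 + α) * (2 + α) ^ n :=
          mul_le_mul h_ratio ih (hhat_pos (by linarith) hn hnα).le (by linarith)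
      _ = (2 + α) ^ (n + 1) := (pow_succ' _ _).symm

lemma summable_affine_pow_mul_geometric (a b : ℝ) (n : ℕ) {r : ℝ} (hr : |r| < 1) :
    Summable fun m : ℕ => (a * m + b) ^ n * r ^ m := by
  simp_rw [add_pow, sum_mul]
  refine summable_sum fun k _ => ?_
  simpa [mul_pow, mul_comm, mul_left_comm, mul_assoc] using
    (summable_pow_mul_geometric_of_norm_lt_one k (r := r) hr).mul_left
      (a ^ k * b ^ (n - k) * n.choose k)

lemma summable_geometric_mul_hhat {r : ℝ} (hr : |r| < 1) {a b : ℝ} (ha : 0 ≤ a) (hb : -1 < b)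
    (n : ℕ) : Summable fun m : ℕ => r ^ m * hhat (a * m + b) (n + 1) := by
  refine .of_norm_bounded (summable_affine_pow_mul_geometric a (2 + b) n (r := |r|)
    (by rwa [abs_abs])) fun m => ?_
  have hα : -1 < a * m + b := by nlinarith [(m.cast_nonneg : (0 : ℝ) ≤ m)]
  have h_pos : 0 < hhat (a * m + b) (n + 1) := hhat_pos (by linarith) (by positivity) (by linarith)
  rw [Real.norm_eq_abs, abs_mul, abs_pow, abs_of_pos h_pos, mul_comm, add_left_comm]
  exact mul_le_mul_of_nonneg_right (hhat_natCast_add_one_le hα n) (by positivity)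

lemma tsum_add_mul_tsum_of_succ {R : Type*} [Ring R] [TopologicalSpace R] [IsTopologicalRing R]
    [T2Space R] {f g h : ℕ → R} (c : R) (hf : Summable f) (hg : Summable g) (h_zero : h 0 = f 0)
    (h_succ : ∀ m, h (m + 1) = f (m + 1) + c * g m) :
    ∑' m, f m + c * ∑' m, g m = ∑' m, h m := by
  have hf_succ : Summable fun m => f (m + 1) := (summable_nat_add_iff 1).mpr hf
  have hh : Summable h := (summable_nat_add_iff 1).mp <| by
    simpa only [h_succ] using hf_succ.add (hg.mul_left c)
  rw [hf.tsum_eq_zero_add, hh.tsum_eq_zero_add, ← hg.tsum_mul_left, h_zero, add_assoc,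
    ← hf_succ.tsum_add (hg.mul_left c)]
  simp only [h_succ]

theorem prob_no_events_general (lam q : ℝ) (hlam0 : 0 < lam) (hlam1 : lam < 1)
    (hq0 : 0 < q) (t : ℕ) (ht : 1 ≤ t) :
    Summable (fun m : ℕ => (-lam) ^ m * hhat (q * m) ((t : ℝ) + 1)) ∧
    Summable (fun m : ℕ => (-lam) ^ m * hhat (q * m + q - 1) ((t : ℝ) + 1)) ∧
    (∑' m : ℕ, (-lam) ^ m * hhat (q * m) ((t : ℝ) + 1)) +
      lam * (∑' m : ℕ, (-lam) ^ m * hhat (q * m + q - 1) ((t : ℝ) + 1)) =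
      dML q (-lam) t := by
  have hr : |-lam| < 1 := by rwa [abs_neg, abs_of_pos hlam0]
  have hf : Summable fun m : ℕ => (-lam) ^ m * hhat (q * m) ((t : ℝ) + 1) := by
    simpa using summable_geometric_mul_hhat hr hq0.le (b := 0) (by norm_num) t
  have hg : Summable fun m : ℕ => (-lam) ^ m * hhat (q * m + q - 1) ((t : ℝ) + 1) := by
    simpa only [add_sub_assoc] using
      summable_geometric_mul_hhat hr hq0.le (b := q - 1) (by linarith) t
  have ht0 : (0 : ℝ) < t := by exact_mod_cast ht
  have h_pascal (m : ℕ) :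
      (-lam) ^ (m + 1) * hhat (q * (m + 1 : ℕ)) t =
        (-lam) ^ (m + 1) * hhat (q * (m + 1 : ℕ)) (t + 1)
          + lam * ((-lam) ^ m * hhat (q * m + q - 1) (t + 1)) := by
    rw [← hhat_add_one_sub_hhat_sub_one (by positivity) ht0, Nat.cast_succ,
      show q * m + q - 1 = q * (m + 1) - 1 by ring, pow_succ]
    ring
  refine ⟨hf, hg, ?_⟩
  rw [tsum_add_mul_tsum_of_succ lam hf hg (h := fun m : ℕ => (-lam) ^ m * hhat (q * m) t)
    (by simp [hhat_zero_left ht0, hhat_zero_left (by positivity : (0 : ℝ) < t + 1)]) h_pascal,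
    dML, if_neg (by omega)]
  simp_rw [mul_comm]

/-- `P(N^q(t) = 0) = P(T > t)`:
`Σ_m (−λ)^m ĥ_{qm}(t+1) + λ·Σ_m (−λ)^m ĥ_{qm+q−1}(t+1) = F_{q,−λ}(t)`,
where both series converge. -/
theorem prob_no_events (lam q : ℝ) (hlam0 : 0 < lam) (hlam1 : lam < 1)
    (hq0 : 0 < q) (hq1 : q ≤ 1) (t : ℕ) (ht : 1 ≤ t) :
    Summable (fun m : ℕ => (-lam) ^ m * hhat (q * m) ((t : ℝ) + 1)) ∧
    Summable (fun m : ℕ => (-lam) ^ m * hhat (q * m + q - 1) ((t : ℝ) + 1)) ∧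
    (∑' m : ℕ, (-lam) ^ m * hhat (q * m) ((t : ℝ) + 1)) +
      lam * (∑' m : ℕ, (-lam) ^ m * hhat (q * m + q - 1) ((t : ℝ) + 1)) =
      dML q (-lam) t :=
  prob_no_events_general lam q hlam0 hlam1 hq0 t ht
end
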